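/- Let λ and μ be weights of a finite crystallographic root system and suppose Σ_{α∈Ř}|⟨μ,α^∨⟩| ≤ Σ_{α∈Ř}|⟨λ,α^∨⟩|. Then ⟨μ, ρ^∨⟩ ≤ ⟨λ_+, ρ^∨⟩ + ℓ(w_∘) − ℓ(ẘ_λ), where λ_+ is the dominant representative of the W̊-orbit of λ, ẘ_λ is the minimal-length element of W̊ with ẘ_λ^{-1}(λ) antidominant, and w_∘ is the longest element of W̊. -/
import Mathlib


noncomputable section
open scoped RealInnerProductSpace
open Finset

variable {V : Type*} [NormedAddCommGroup V] [InnerProductSpace ℝ V]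

/-- The coroot `α^∨ = 2α/(α,α)` of a vector `α`. -/
def coroot (α : V) : V := (2 / ⟪α, α⟫) • α

/-- The reflection `s_α(x) = x - ⟨x, α^∨⟩ α`. -/
def reflectIn (α : V) (x : V) : V := x - ⟪x, coroot α⟫ • α

/-- The affine hyperplane `H_{α,k} = {x : ⟨x, α^∨⟩ = k}` separates `A` and `B`. -/
def Separates (α : V) (k : ℤ) (A B : Set V) : Prop :=
  (∀ a ∈ A, ⟪a, coroot α⟫ ≤ (k : ℝ)) ∧ (∀ b ∈ B, (k : ℝ) ≤ ⟪b, coroot α⟫) ∧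
  ¬ (A ∪ B ⊆ {x | ⟪x, coroot α⟫ = (k : ℝ)})

/-- A finite crystallographic root system in a real inner product space,
with a chosen system of positive roots and simple roots. -/
structure FCRS (V : Type*) [NormedAddCommGroup V] [InnerProductSpace ℝ V] where
  R : Finset V
  Δ : Finset V
  pos : Finset V
  nonzero : ∀ α ∈ R, α ≠ 0
  simple_sub_pos : Δ ⊆ pos
  pos_sub : pos ⊆ R
  neg_mem : ∀ α ∈ R, -α ∈ R
  pos_or_neg : ∀ α ∈ R, α ∈ pos ∨ -α ∈ pos
  not_both : ∀ α ∈ pos, -α ∉ pos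
  crystal : ∀ α ∈ R, ∀ β ∈ R, ∃ k : ℤ, ⟪β, coroot α⟫ = (k : ℝ)
  reflect_mem : ∀ α ∈ R, ∀ β ∈ R, reflectIn α β ∈ R
  pos_combo : ∀ α ∈ pos, ∃ c : V → ℝ, (∀ β ∈ Δ, 0 ≤ c β) ∧ α = ∑ β ∈ Δ, c β • β

namespace FCRS

variable {V : Type*} [NormedAddCommGroup V] [InnerProductSpace ℝ V] (S : FCRS V)

/-- `ρ^∨`, the half sum of the positive coroots. -/
def rhoCheck : V := (2 : ℝ)⁻¹ • ∑ α ∈ S.pos, coroot α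

/-- `ρ`, the half sum of the positive roots. -/
def rhoR : V := (2 : ℝ)⁻¹ • ∑ α ∈ S.pos, α

/-- membership in the weight lattice `P`. -/
def IsWeight (l : V) : Prop := ∀ α ∈ S.R, ∃ k : ℤ, ⟪l, coroot α⟫ = (k : ℝ)

def IsDominant (l : V) : Prop := ∀ α ∈ S.pos, 0 ≤ ⟪l, coroot α⟫

def IsAntidominant (l : V) : Prop := ∀ α ∈ S.pos, ⟪l, coroot α⟫ ≤ 0

/-- membership in the finite Weyl group `W̊` (generated by the simple reflections). -/
def InWeyl (w : V → V) : Prop :=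
  ∃ L : List V, (∀ α ∈ L, α ∈ S.Δ) ∧ w = (L.map reflectIn).foldr (· ∘ ·) id

/-- the Coxeter length of an element of `W̊`: the length of a shortest word in the
simple reflections representing it. -/
def len (w : V → V) : ℕ :=
  sInf {n | ∃ L : List V, L.length = n ∧ (∀ α ∈ L, α ∈ S.Δ) ∧
    w = (L.map reflectIn).foldr (· ∘ ·) id}

/-- `w` is the longest element `w_∘` of `W̊`. -/
def IsLongest (w : V → V) : Prop :=
  S.InWeyl w ∧ ∀ w', S.InWeyl w' → S.len w' ≤ S.len w

/-- `w = ẘ_λ` is a minimal length element of `W̊` such that `w⁻¹(λ)` is antidominant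
(equivalently, `λ = w(ν)` for some antidominant `ν`). -/
def IsMinAntidom (l : V) (w : V → V) : Prop :=
  (S.InWeyl w ∧ ∃ ν, S.IsAntidominant ν ∧ w ν = l) ∧
  ∀ w', (S.InWeyl w' ∧ ∃ ν, S.IsAntidominant ν ∧ w' ν = l) → S.len w ≤ S.len w'

/-- `lp = λ₊` is the dominant representative of the `W̊`-orbit of `l`. -/
def IsDomRep (l lp : V) : Prop := S.IsDominant lp ∧ ∃ w, S.InWeyl w ∧ w l = lp

/-- `Σ_{α ∈ Ř} |⟨λ, α^∨⟩|`. -/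
def lenTau (l : V) : ℝ := ∑ α ∈ S.R, |⟪l, coroot α⟫|

/-- `θ` is the highest short root (short roots have squared length 2). -/
def IsHighestShort (θ : V) : Prop :=
  θ ∈ S.pos ∧ ⟪θ, θ⟫ = 2 ∧
  ∀ α ∈ S.R, ⟪α, α⟫ = 2 →
    ∃ c : V → ℝ, (∀ β ∈ S.Δ, 0 ≤ c β) ∧ θ - α = ∑ β ∈ S.Δ, c β • β

/-- The fundamental affine chamber (alcove)
`C = {x : ⟨x, α_i^∨⟩ ≥ 0 for all simple α_i, ⟨x, θ^∨⟩ ≤ 1}`. -/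
def alcove (θ : V) : Set V :=
  {x | (∀ α ∈ S.Δ, 0 ≤ ⟪x, coroot α⟫) ∧ ⟪x, coroot θ⟫ ≤ 1}

/-- The set of affine reflection hyperplanes separating the fundamental alcove `C`
from its translate `τ_λ · C = C + λ`. -/
def sepHyperplanes (θ l : V) : Set (Set V) :=
  {H | ∃ α ∈ S.R, ∃ k : ℤ, H = {x | ⟪x, coroot α⟫ = (k : ℝ)} ∧
    (Separates α k (S.alcove θ) ((· + l) '' S.alcove θ) ∨
     Separates α k ((· + l) '' S.alcove θ) (S.alcove θ))}

/-- membership in the affine Weyl group `W`, acting on `𝔥*_ℝ` by the affine action: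
generated by the simple reflections `s_α` (`α` simple) together with
`s_0 · x = s_θ(x) + θ`. -/
def InAffWeyl (θ : V) (w : V → V) : Prop :=
  ∃ L : List (V → V),
    (∀ f ∈ L, (∃ α ∈ S.Δ, f = reflectIn α) ∨ f = fun x => reflectIn θ x + θ) ∧
    w = L.foldr (· ∘ ·) id

end FCRS

/-- The bilinear form on `H = 𝔥*_ℝ ⊕ ℝδ ⊕ ℝΛ_0` extending the inner product,
with `(δ, 𝔥*_ℝ ⊕ ℝδ) = (Λ_0, 𝔥*_ℝ ⊕ ℝΛ_0) = 0` and `(δ, Λ_0) = 1`.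
An element `(x, a, b)` stands for `x + aδ + bΛ_0`. -/
def bform (v w : V × ℝ × ℝ) : ℝ := ⟪v.1, w.1⟫ + v.2.1 * w.2.2 + v.2.2 * w.2.1

/-- The reflection `s_a(v) = v - 2(v,a)/(a,a) · a` on `H`. -/
def saff (a : V × ℝ × ℝ) (v : V × ℝ × ℝ) : V × ℝ × ℝ :=
  v - (2 * bform v a / bform a a) • a

section AuxLemmas

variable {V : Type*} [NormedAddCommGroup V] [InnerProductSpace ℝ V]

lemma coroot_inner' (x α : V) : ⟪x, coroot α⟫ = (2 / ⟪α, α⟫) * ⟪x, α⟫ := by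
  simp [coroot, real_inner_smul_right]

lemma coroot_neg' (α : V) : coroot (-α) = -coroot α := by
  simp [coroot, smul_neg]

lemma reflectIn_inner' (β x y : V) : ⟪reflectIn β x, y⟫ = ⟪x, reflectIn β y⟫ := by
  simp only [reflectIn, inner_sub_left, inner_sub_right, real_inner_smul_left,
    real_inner_smul_right, coroot_inner']
  rw [real_inner_comm β y]
  ring

lemma reflectIn_inner_self' (β : V) (hβ : β ≠ 0) (x : V) :
    ⟪reflectIn β x, reflectIn β x⟫ = ⟪x, x⟫ := by
  have hb : ⟪β, β⟫ ≠ 0 := fun h => hβ (inner_self_eq_zero.mp h)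
  simp only [reflectIn, inner_sub_left, inner_sub_right, real_inner_smul_left,
    real_inner_smul_right, coroot_inner']
  rw [real_inner_comm β x]
  field_simp
  ring

lemma reflectIn_smul' (β : V) (c : ℝ) (x : V) :
    reflectIn β (c • x) = c • reflectIn β x := by
  simp [reflectIn, real_inner_smul_left, smul_sub, smul_smul]

lemma coroot_reflectIn' (β : V) (hβ : β ≠ 0) (α : V) :
    coroot (reflectIn β α) = reflectIn β (coroot α) := by
  rw [coroot, reflectIn_inner_self' β hβ, coroot, reflectIn_smul']

lemma inner_reflect_coroot' (β : V) (hβ : β ≠ 0) (x α : V) :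
    ⟪reflectIn β x, coroot α⟫ = ⟪x, coroot (reflectIn β α)⟫ := by
  rw [reflectIn_inner', coroot_reflectIn' β hβ]

lemma inner_coroot_self' (β : V) (hβ : β ≠ 0) : ⟪β, coroot β⟫ = 2 := by
  have hb : ⟪β, β⟫ ≠ 0 := fun h => hβ (inner_self_eq_zero.mp h)
  rw [coroot_inner']
  field_simp

lemma reflectIn_reflectIn' (β : V) (hβ : β ≠ 0) (x : V) :
    reflectIn β (reflectIn β x) = x := by
  have h1 : ⟪reflectIn β x, coroot β⟫ = -⟪x, coroot β⟫ := by
    simp only [reflectIn, inner_sub_left, real_inner_smul_left, inner_coroot_self' β hβ]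
    ring
  rw [reflectIn, h1, reflectIn]
  module

lemma lenTau_reflect (S : FCRS V) {β : V} (hβ : β ∈ S.R) (l : V) :
    S.lenTau (reflectIn β l) = S.lenTau l := by
  have hβ0 : β ≠ 0 := S.nonzero β hβ
  unfold FCRS.lenTau
  refine Finset.sum_nbij' (i := reflectIn β) (j := reflectIn β) ?_ ?_ ?_ ?_ ?_
  · intro α hα; exact S.reflect_mem β hβ α hα
  · intro α hα; exact S.reflect_mem β hβ α hα
  · intro α _; exact reflectIn_reflectIn' β hβ0 α
  · intro α _; exact reflectIn_reflectIn' β hβ0 α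
  · intro α _; rw [inner_reflect_coroot' β hβ0]

lemma lenTau_weyl (S : FCRS V) {w : V → V} (hw : S.InWeyl w) (l : V) :
    S.lenTau (w l) = S.lenTau l := by
  obtain ⟨L, hL, rfl⟩ := hw
  induction L with
  | nil => simp
  | cons a L ih =>
    simp only [List.map_cons, List.foldr_cons, Function.comp_apply]
    rw [lenTau_reflect S (S.pos_sub (S.simple_sub_pos (hL a (by simp))))]
    exact ih fun α h => hL α (List.mem_cons_of_mem _ h)

lemma lenTau_eq_two_sum_pos (S : FCRS V) (l : V) :
    S.lenTau l = 2 * ∑ α ∈ S.pos, |⟪l, coroot α⟫| := by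
  classical
  have hdisj : Disjoint S.pos (S.pos.image Neg.neg) := by
    rw [Finset.disjoint_left]
    intro a ha hb
    obtain ⟨b, hb', rfl⟩ := Finset.mem_image.mp hb
    exact S.not_both b hb' ha
  have hR : S.R = S.pos ∪ S.pos.image Neg.neg := by
    apply Finset.Subset.antisymm
    · intro α hα
      rcases S.pos_or_neg α hα with h | h
      · exact Finset.mem_union_left _ h
      · exact Finset.mem_union_right _ (Finset.mem_image.mpr ⟨-α, h, by simp⟩)
    · intro α hα
      rcases Finset.mem_union.mp hα with h | h
      · exact S.pos_sub h
      · obtain ⟨b, hb, rfl⟩ := Finset.mem_image.mp h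
        exact S.neg_mem b (S.pos_sub hb)
  rw [FCRS.lenTau, hR, Finset.sum_union hdisj,
    Finset.sum_image (by intro x _ y _ h; exact neg_injective h)]
  simp only [coroot_neg', inner_neg_right, abs_neg]
  ring

lemma inner_rhoCheck (S : FCRS V) (m : V) :
    ⟪m, S.rhoCheck⟫ = 2⁻¹ * ∑ α ∈ S.pos, ⟪m, coroot α⟫ := by
  simp [FCRS.rhoCheck, real_inner_smul_right, inner_sum]

end AuxLemmas

/-- if `Σ_{α∈Ř}|⟨μ,α^∨⟩| ≤ Σ_{α∈Ř}|⟨λ,α^∨⟩|` then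
`⟨μ, ρ^∨⟩ ≤ ⟨λ₊, ρ^∨⟩ + ℓ(w_∘) − ℓ(ẘ_λ)`. -/
theorem mu_rho_pairing_bound
    {V : Type*} [NormedAddCommGroup V] [InnerProductSpace ℝ V]
    (S : FCRS V) (l m lp : V) (hl : S.IsWeight l) (hm : S.IsWeight m)
    (hlp : S.IsDomRep l lp)
    (wl w0 : V → V) (hwl : S.IsMinAntidom l wl) (hw0 : S.IsLongest w0)
    (hle : S.lenTau m ≤ S.lenTau l) :
    ⟪m, S.rhoCheck⟫ ≤ ⟪lp, S.rhoCheck⟫ + (S.len w0 : ℝ) - (S.len wl : ℝ) := by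
  obtain ⟨hdom, w, hwW, hweq⟩ := hlp
  have hlen : (S.len wl : ℝ) ≤ (S.len w0 : ℝ) := by
    exact_mod_cast hw0.2 wl hwl.1.1
  have e1 : S.lenTau lp = S.lenTau l := by
    rw [← hweq]; exact lenTau_weyl S hwW l
  have e2 : S.lenTau lp = 4 * ⟪lp, S.rhoCheck⟫ := by
    rw [lenTau_eq_two_sum_pos, inner_rhoCheck,
      Finset.sum_congr rfl fun α hα => abs_of_nonneg (hdom α hα)]
    ring
  have e3 : ⟪m, S.rhoCheck⟫ ≤ 4⁻¹ * S.lenTau m := by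
    rw [inner_rhoCheck, lenTau_eq_two_sum_pos]
    have h := Finset.sum_le_sum fun α (_ : α ∈ S.pos) => le_abs_self ⟪m, coroot α⟫
    linarith
  linarith
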